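/- Let W : Fin d → Fin d → ℝ have all entries in [0,1] and let α ∈ (0,1]. Then for all nodes x, y: S̃_W^(0)(x,y) ≤ log 𝔼_{A∼Bern(W)}[S_A^(0)(x,y)] and C̃_W^(0)(x,y) ≤ log 𝔼_{A∼Bern(W)}[C_A^(0)(x,y)], where S_A^(0) and C_A^(0) are {0,1}-valued, the inequalities are in the extended reals, and log 0 = −∞. (Theorem 3.7, 0th-order inequalities.) -/

import Mathlib

open MeasureTheory
open scoped ENNReal

noncomputable section

/-- The reachability formula `R_A^(l)(x,y)`, defined recursively. -/
def ReachF {d : ℕ} (A : Fin d → Fin d → Bool) : ℕ → Fin d → Fin d → Bool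
  | 0, x, y => decide (x = y)
  | l + 1, x, y =>
      (decide (∃ u : Fin d, ReachF A l x u = true ∧ A u y = true)) || ReachF A l x y

/-- Bernoulli measure on `Bool` with parameter `p`. -/
def bernoulliMeasure (p : ℝ) : Measure Bool :=
  ENNReal.ofReal p • Measure.dirac true + ENNReal.ofReal (1 - p) • Measure.dirac false

instance (p : ℝ) : IsFiniteMeasure (bernoulliMeasure p) := by
  constructor
  have h : bernoulliMeasure p Set.univ = ENNReal.ofReal p + ENNReal.ofReal (1 - p) := by
    simp [bernoulliMeasure]
  rw [h]
  exact ENNReal.add_lt_top.2 ⟨ENNReal.ofReal_lt_top, ENNReal.ofReal_lt_top⟩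

/-- `Bern(W)`: the product over all pairs `(u, v)` of Bernoulli measures, under which
the coordinates `A u v` are independent with `ℙ(A u v = true) = W u v`. -/
def bernMeasure {d : ℕ} (W : Fin d → Fin d → ℝ) : Measure (Fin d → Fin d → Bool) :=
  Measure.pi fun u => Measure.pi fun v => bernoulliMeasure (W u v)

/-- Exponential on extended reals, with `exp (−∞) = 0` and `exp ⊤ = ⊤`. -/
def eexp (x : EReal) : ℝ≥0∞ :=
  if x = ⊥ then 0 else if x = ⊤ then ⊤ else ENNReal.ofReal (Real.exp x.toReal)

/-- Logarithm on `ℝ≥0∞`, with `log 0 = −∞` and `log ⊤ = ⊤`. -/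
def elog (x : ℝ≥0∞) : EReal :=
  if x = 0 then ⊥ else if x = ⊤ then ⊤ else ((Real.log x.toReal : ℝ) : EReal)

/-- LogMeanExp soft disjunction `T⊕_α` with temperature `α` over a finite family. -/
def softOr (α : ℝ) {ι : Type*} [Fintype ι] (x : ι → EReal) : EReal :=
  (α : EReal) * elog ((∑ i, eexp (((α⁻¹ : ℝ) : EReal) * x i)) / (Fintype.card ι : ℝ≥0∞))

/-- Soft graph reachability `R̃_W^(l)`. -/
def softReach {d : ℕ} (α : ℝ) (W : Fin d → Fin d → ℝ) : ℕ → Fin d → Fin d → EReal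
  | 0, x, y => if x = y then 0 else ⊥
  | l + 1, x, y =>
      softOr α
        (Fin.cons (softReach α W l x y)
          (fun u : Fin d => softReach α W l x u + elog (ENNReal.ofReal (W u y))) :
          Fin (d + 1) → EReal)

/-- Soft graph unreachability `Ũ_W^(l)`. -/
def softUnreach {d : ℕ} (α : ℝ) (W : Fin d → Fin d → ℝ) : ℕ → Fin d → Fin d → EReal
  | 0, x, y => if x ≠ y then 0 else ⊥
  | l + 1, x, y =>
      (∑ u : Fin d,
        softOr α ![softUnreach α W l x u, elog (ENNReal.ofReal (1 - W u y))])
        + softUnreach α W l x y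

/-- The 0th-order d-connection formula `C_A^(0)(x,y)`, using `R_A := R_A^(d)`. -/
def C0 {d : ℕ} (A : Fin d → Fin d → Bool) (x y : Fin d) : Bool :=
  decide (∃ a : Fin d, ReachF A d a x = true ∧ ReachF A d a y = true)

/-- The soft 0th-order d-separation score `S̃_W^(0)`. -/
def softS0 {d : ℕ} (α : ℝ) (W : Fin d → Fin d → ℝ) (x y : Fin d) : EReal :=
  ∑ a : Fin d, softOr α ![softUnreach α W d a x, softUnreach α W d a y]

/-- The soft 0th-order d-connection score `C̃_W^(0)`. -/
def softC0 {d : ℕ} (α : ℝ) (W : Fin d → Fin d → ℝ) (x y : Fin d) : EReal :=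
  softOr α (fun a : Fin d => softReach α W d a x + softReach α W d a y)

/-!
`T⊕_α` never exceeds the largest of its arguments, so every soft score is bounded by the score
with `T⊕_α` replaced by a maximum. By induction on `l`, `exp R̃^(l)(x,y) ≤ ℙ(R^(l)(x,y))` and
`exp Ũ^(l)(x,y) ≤ ℙ(¬R^(l)(x,y))`: a maximum of probabilities is at most the probability of the
union, and a product of probabilities of events that are all increasing (reachability, presence
of an edge) or all decreasing in the graph is at most the probability of their intersection, by
the Harris–FKG inequality. FKG applies because `Bern(W)` is a product measure on the distributive
lattice of graphs, so its point masses satisfy `μ{a} μ{b} ≤ μ{a ⊓ b} μ{a ⊔ b}`. The bounds for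
`C̃` and `S̃` follow from those for `R̃` and `Ũ` in the same way.
-/

open Set
open scoped NNReal

lemma eexp_eq_exp : eexp = EReal.exp := by
  funext x
  induction x using EReal.rec <;> simp [eexp]

lemma elog_eq_log : elog = ENNReal.log := rfl

lemma ENNReal.le_log_iff_exp_le {x : EReal} {y : ℝ≥0∞} :
    x ≤ ENNReal.log y ↔ EReal.exp x ≤ y := by
  rw [← EReal.exp_le_exp_iff, ENNReal.exp_log]

lemma EReal.exp_sum {ι : Type*} (s : Finset ι) (f : ι → EReal) :
    EReal.exp (∑ i ∈ s, f i) = ∏ i ∈ s, EReal.exp (f i) := by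
  classical
  induction s using Finset.induction with
  | empty => simp
  | insert i s hi ih => rw [Finset.sum_insert hi, Finset.prod_insert hi, EReal.exp_add, ih]

lemma softOr_le {ι : Type*} [Fintype ι] {α : ℝ} (hα : 0 < α) {x : ι → EReal} {b : EReal}
    (hx : ∀ i, x i ≤ b) : softOr α x ≤ b := by
  have hα_inv : (0 : EReal) ≤ (α⁻¹ : ℝ) := by exact_mod_cast (inv_pos.2 hα).le
  have hmean : (∑ i, EReal.exp ((α⁻¹ : ℝ) * x i)) / Fintype.card ι
      ≤ EReal.exp ((α⁻¹ : ℝ) * b) := by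
    refine ENNReal.div_le_of_le_mul ?_
    calc ∑ i, EReal.exp ((α⁻¹ : ℝ) * x i)
        ≤ ∑ _i : ι, EReal.exp ((α⁻¹ : ℝ) * b) :=
          Finset.sum_le_sum fun i _ =>
            EReal.exp_monotone (mul_le_mul_of_nonneg_left (hx i) hα_inv)
      _ = _ := by simp [mul_comm]
  calc softOr α x ≤ (α : EReal) * ((α⁻¹ : ℝ) * b) := by
        rw [softOr, eexp_eq_exp, elog_eq_log]
        exact mul_le_mul_of_nonneg_left
          ((ENNReal.log_monotone hmean).trans_eq (EReal.log_exp _)) (by exact_mod_cast hα.le)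
    _ = b := by
      rw [← mul_assoc, ← EReal.coe_mul, mul_inv_cancel₀ hα.ne', EReal.coe_one, one_mul]

lemma exp_softOr_le {ι : Type*} [Fintype ι] {α : ℝ} (hα : 0 < α) {x : ι → EReal}
    {p : ℝ≥0∞} (hx : ∀ i, EReal.exp (x i) ≤ p) : EReal.exp (softOr α x) ≤ p :=
  ENNReal.le_log_iff_exp_le.1 <| softOr_le hα fun i => ENNReal.le_log_iff_exp_le.2 (hx i)

section Harris

variable {Ω : Type*}

lemma IsUpperSet.monotone_indicator_one [Preorder Ω] {s : Set Ω} (hs : IsUpperSet s) :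
    Monotone (s.indicator (1 : Ω → ℝ≥0)) := by
  intro a b hab
  by_cases ha : a ∈ s
  · simp [ha, hs hab ha]
  · simp [ha]

variable [Fintype Ω] [DistribLattice Ω]

lemma sum_indicator_mul_sum_indicator_le_of_isUpperSet (w : Ω → ℝ≥0)
    (hw : ∀ a b, w a * w b ≤ w (a ⊓ b) * w (a ⊔ b)) {s t : Set Ω} (hs : IsUpperSet s)
    (ht : IsUpperSet t) :
    (∑ a, s.indicator w a) * ∑ a, t.indicator w a ≤
      (∑ a, w a) * ∑ a, (s ∩ t).indicator w a := by
  have h := fkg (s.indicator 1) (t.indicator 1) w (fun _ => zero_le) (fun _ => zero_le)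
    (fun _ => zero_le) hs.monotone_indicator_one ht.monotone_indicator_one hw
  have hind : ∀ (u : Set Ω) a, u.indicator w a = w a * u.indicator 1 a := fun u a => by
    by_cases ha : a ∈ u <;> simp [ha]
  simpa only [hind, inter_indicator_one, Pi.mul_apply] using h

lemma sum_indicator_mul_sum_indicator_le_of_isLowerSet (w : Ω → ℝ≥0)
    (hw : ∀ a b, w a * w b ≤ w (a ⊓ b) * w (a ⊔ b)) {s t : Set Ω} (hs : IsLowerSet s)
    (ht : IsLowerSet t) :
    (∑ a, s.indicator w a) * ∑ a, t.indicator w a ≤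
      (∑ a, w a) * ∑ a, (s ∩ t).indicator w a :=
  sum_indicator_mul_sum_indicator_le_of_isUpperSet (Ω := Ωᵒᵈ) (w ∘ OrderDual.ofDual)
    (fun _ _ => (hw _ _).trans_eq (mul_comm _ _)) hs.toDual ht.toDual

end Harris

namespace MeasureTheory.Measure

variable {Ω : Type*} [MeasurableSpace Ω]

def IsLogSupermodular [Lattice Ω] (μ : Measure Ω) : Prop :=
  ∀ a b : Ω, μ {a} * μ {b} ≤ μ {a ⊓ b} * μ {a ⊔ b}

lemma isLogSupermodular_of_linearOrder [LinearOrder Ω] (μ : Measure Ω) :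
    μ.IsLogSupermodular := by
  intro a b
  rcases le_total a b with h | h
  · simp [inf_eq_left.2 h, sup_eq_right.2 h]
  · simp [inf_eq_right.2 h, sup_eq_left.2 h, mul_comm]

lemma IsLogSupermodular.pi {ι : Type*} [Fintype ι] {X : ι → Type*} [∀ i, Lattice (X i)]
    [∀ i, MeasurableSpace (X i)] {μ : ∀ i, Measure (X i)} [∀ i, SigmaFinite (μ i)]
    (h : ∀ i, (μ i).IsLogSupermodular) : (Measure.pi μ).IsLogSupermodular := by
  intro a b
  simp only [pi_singleton, ← Finset.prod_mul_distrib]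
  exact Finset.prod_le_prod' fun i _ => h i (a i) (b i)

lemma IsLogSupermodular.toNNReal [Lattice Ω] {μ : Measure Ω} [IsFiniteMeasure μ]
    (hμ : μ.IsLogSupermodular) (a b : Ω) :
    (μ {a}).toNNReal * (μ {b}).toNNReal ≤
      (μ {a ⊓ b}).toNNReal * (μ {a ⊔ b}).toNNReal := by
  simpa only [ENNReal.toNNReal_mul] using
    ENNReal.toNNReal_mono (ENNReal.mul_ne_top (measure_ne_top μ _) (measure_ne_top μ _))
      (hμ a b)

variable [Fintype Ω] [MeasurableSingletonClass Ω]

lemma measure_eq_sum_indicator_toNNReal (μ : Measure Ω) [IsFiniteMeasure μ] (s : Set Ω) :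
    μ s = ↑(∑ a, s.indicator (fun a => (μ {a}).toNNReal) a) := by
  rw [← lintegral_indicator_one (s.toFinite.measurableSet), lintegral_fintype,
    ENNReal.ofNNReal_finsetSum]
  refine Finset.sum_congr rfl fun a _ => ?_
  by_cases ha : a ∈ s <;> simp [ha, ENNReal.coe_toNNReal (measure_ne_top μ _)]

variable [DistribLattice Ω] {μ : Measure Ω} [IsFiniteMeasure μ] {s t : Set Ω}

theorem IsLogSupermodular.measure_mul_measure_le_of_isUpperSet (hμ : μ.IsLogSupermodular)
    (hs : IsUpperSet s) (ht : IsUpperSet t) : μ s * μ t ≤ μ univ * μ (s ∩ t) := by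
  rw [measure_eq_sum_indicator_toNNReal μ s, measure_eq_sum_indicator_toNNReal μ t,
    measure_eq_sum_indicator_toNNReal μ univ, measure_eq_sum_indicator_toNNReal μ (s ∩ t),
    indicator_univ, ← ENNReal.coe_mul, ← ENNReal.coe_mul, ENNReal.coe_le_coe]
  exact sum_indicator_mul_sum_indicator_le_of_isUpperSet _ hμ.toNNReal hs ht

theorem IsLogSupermodular.measure_mul_measure_le_of_isLowerSet (hμ : μ.IsLogSupermodular)
    (hs : IsLowerSet s) (ht : IsLowerSet t) : μ s * μ t ≤ μ univ * μ (s ∩ t) := by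
  rw [measure_eq_sum_indicator_toNNReal μ s, measure_eq_sum_indicator_toNNReal μ t,
    measure_eq_sum_indicator_toNNReal μ univ, measure_eq_sum_indicator_toNNReal μ (s ∩ t),
    indicator_univ, ← ENNReal.coe_mul, ← ENNReal.coe_mul, ENNReal.coe_le_coe]
  exact sum_indicator_mul_sum_indicator_le_of_isLowerSet _ hμ.toNNReal hs ht

theorem IsLogSupermodular.prod_measure_le_of_isLowerSet [IsProbabilityMeasure μ]
    (hμ : μ.IsLogSupermodular) {κ : Type*} {s : κ → Set Ω} (hs : ∀ k, IsLowerSet (s k))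
    (K : Finset κ) : ∏ k ∈ K, μ (s k) ≤ μ (⋂ k ∈ K, s k) := by
  classical
  induction K using Finset.induction with
  | empty => simp
  | insert k K hk ih =>
    rw [Finset.prod_insert hk, Finset.set_biInter_insert]
    calc μ (s k) * ∏ k ∈ K, μ (s k) ≤ μ (s k) * μ (⋂ k ∈ K, s k) := by gcongr
      _ ≤ μ (s k ∩ ⋂ k ∈ K, s k) := by
        simpa using hμ.measure_mul_measure_le_of_isLowerSet (hs k)
          (isLowerSet_iInter₂ fun k _ => hs k)

end MeasureTheory.Measure

section Bernoulli

lemma bernoulliMeasure_true (p : ℝ) : bernoulliMeasure p {true} = ENNReal.ofReal p := by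
  simp [bernoulliMeasure]

lemma bernoulliMeasure_false (p : ℝ) : bernoulliMeasure p {false} = ENNReal.ofReal (1 - p) := by
  simp [bernoulliMeasure]

lemma isProbabilityMeasure_bernoulliMeasure {p : ℝ} (hp : p ∈ Icc (0 : ℝ) 1) :
    IsProbabilityMeasure (bernoulliMeasure p) :=
  ⟨by simp [bernoulliMeasure, ← ENNReal.ofReal_add hp.1 (sub_nonneg.2 hp.2)]⟩

variable {d : ℕ} {W : Fin d → Fin d → ℝ}

lemma isProbabilityMeasure_bernMeasure (hW : ∀ u v, W u v ∈ Icc (0 : ℝ) 1) :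
    IsProbabilityMeasure (bernMeasure W) := by
  have := fun u v => isProbabilityMeasure_bernoulliMeasure (hW u v)
  unfold bernMeasure
  infer_instance

lemma isLogSupermodular_bernMeasure (W : Fin d → Fin d → ℝ) :
    (bernMeasure W).IsLogSupermodular :=
  .pi fun _ => .pi fun _ => Measure.isLogSupermodular_of_linearOrder _

lemma bernMeasure_setOf_apply_eq (hW : ∀ u v, W u v ∈ Icc (0 : ℝ) 1) (u v : Fin d)
    (b : Bool) :
    bernMeasure W {A | A u v = b} = bernoulliMeasure (W u v) {b} := by
  have := fun u v => isProbabilityMeasure_bernoulliMeasure (hW u v)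
  have hset : {A : Fin d → Fin d → Bool | A u v = b}
      = Function.eval u ⁻¹' (Function.eval v ⁻¹' {b}) := rfl
  rw [hset, bernMeasure,
    (measurePreserving_eval _ u).measure_preimage (toFinite _).measurableSet.nullMeasurableSet,
    (measurePreserving_eval _ v).measure_preimage (toFinite _).measurableSet.nullMeasurableSet]

end Bernoulli

section Reachability

variable {d : ℕ}

def reachSet (l : ℕ) (x y : Fin d) : Set (Fin d → Fin d → Bool) := {A | ReachF A l x y = true}

def edgeSet (u v : Fin d) : Set (Fin d → Fin d → Bool) := {A | A u v = true}

lemma monotone_reachF (l : ℕ) (x y : Fin d) : Monotone fun A => ReachF A l x y := by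
  intro A B h
  induction l generalizing y with
  | zero => exact id
  | succ l ih =>
    intro hA
    simp only [ReachF, Bool.or_eq_true, decide_eq_true_eq] at hA ⊢
    rcases hA with ⟨u, hxu, huy⟩ | hxy
    · exact Or.inl ⟨u, ih u hxu, h u y huy⟩
    · exact Or.inr (ih y hxy)

lemma isUpperSet_reachSet (l : ℕ) (x y : Fin d) : IsUpperSet (reachSet l x y) :=
  fun _ _ h => monotone_reachF l x y h

lemma isUpperSet_edgeSet (u v : Fin d) : IsUpperSet (edgeSet u v) :=
  fun _ _ h hA => h u v hA

lemma reachSet_succ (l : ℕ) (x y : Fin d) :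
    reachSet (l + 1) x y = (⋃ u, reachSet l x u ∩ edgeSet u y) ∪ reachSet l x y := by
  ext A
  simp [reachSet, edgeSet, ReachF]

lemma setOf_C0_eq (x y : Fin d) :
    {A | C0 A x y = true} = ⋃ a, reachSet d a x ∩ reachSet d a y := by
  ext A
  simp [C0, reachSet]

variable {W : Fin d → Fin d → ℝ}

lemma bernMeasure_edgeSet (hW : ∀ u v, W u v ∈ Icc (0 : ℝ) 1) (u v : Fin d) :
    bernMeasure W (edgeSet u v) = ENNReal.ofReal (W u v) := by
  rw [edgeSet, bernMeasure_setOf_apply_eq hW, bernoulliMeasure_true]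

lemma bernMeasure_compl_edgeSet (hW : ∀ u v, W u v ∈ Icc (0 : ℝ) 1) (u v : Fin d) :
    bernMeasure W (edgeSet u v)ᶜ = ENNReal.ofReal (1 - W u v) := by
  simp only [edgeSet, compl_ofPred, Bool.not_eq_true]
  rw [bernMeasure_setOf_apply_eq hW, bernoulliMeasure_false]

end Reachability

section SoftBounds

variable {d : ℕ} {W : Fin d → Fin d → ℝ} {α : ℝ}

theorem exp_softReach_le (hW : ∀ u v, W u v ∈ Icc (0 : ℝ) 1) (hα : 0 < α) (l : ℕ)
    (x y : Fin d) : EReal.exp (softReach α W l x y) ≤ bernMeasure W (reachSet l x y) := by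
  have := isProbabilityMeasure_bernMeasure hW
  induction l generalizing y with
  | zero =>
    by_cases h : x = y
    · subst h
      simp [softReach, reachSet, ReachF]
    · simp [softReach, h]
  | succ l ih =>
    refine exp_softOr_le hα (Fin.cases ?_ fun u => ?_)
    · rw [Fin.cons_zero, reachSet_succ]
      exact (ih y).trans (measure_mono subset_union_right)
    · calc EReal.exp (softReach α W l x u + elog (ENNReal.ofReal (W u y)))
          = EReal.exp (softReach α W l x u) * bernMeasure W (edgeSet u y) := by
            rw [EReal.exp_add, elog_eq_log, ENNReal.exp_log, bernMeasure_edgeSet hW]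
        _ ≤ bernMeasure W (reachSet l x u) * bernMeasure W (edgeSet u y) := by
            gcongr
            exact ih u
        _ ≤ bernMeasure W (reachSet l x u ∩ edgeSet u y) := by
            simpa using (isLogSupermodular_bernMeasure W).measure_mul_measure_le_of_isUpperSet
              (isUpperSet_reachSet l x u) (isUpperSet_edgeSet u y)
        _ ≤ bernMeasure W (reachSet (l + 1) x y) := by
            rw [reachSet_succ]
            exact measure_mono (subset_union_of_subset_left
              (subset_iUnion (fun u => reachSet l x u ∩ edgeSet u y) u) _)

theorem exp_softUnreach_le (hW : ∀ u v, W u v ∈ Icc (0 : ℝ) 1) (hα : 0 < α) (l : ℕ)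
    (x y : Fin d) : EReal.exp (softUnreach α W l x y) ≤ bernMeasure W (reachSet l x y)ᶜ := by
  have := isProbabilityMeasure_bernMeasure hW
  have hμ := isLogSupermodular_bernMeasure W
  induction l generalizing y with
  | zero =>
    by_cases h : x = y
    · simp [softUnreach, h]
    · simp [softUnreach, reachSet, ReachF, h]
  | succ l ih =>
    set E : Fin d → Set (Fin d → Fin d → Bool) := fun u =>
      (reachSet l x u)ᶜ ∪ (edgeSet u y)ᶜ
    have hE : ∀ u, IsLowerSet (E u) := fun u =>
      (isUpperSet_reachSet l x u).compl.union (isUpperSet_edgeSet u y).compl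
    have hstep : ∀ u, EReal.exp (softOr α ![softUnreach α W l x u,
        elog (ENNReal.ofReal (1 - W u y))]) ≤ bernMeasure W (E u) := fun u =>
      exp_softOr_le hα <| Fin.forall_fin_two.2
        ⟨(ih u).trans (measure_mono subset_union_left), by
          rw [Matrix.cons_val_one, Matrix.cons_val_zero, elog_eq_log, ENNReal.exp_log,
            ← bernMeasure_compl_edgeSet hW]
          exact measure_mono subset_union_right⟩
    calc EReal.exp (softUnreach α W (l + 1) x y)
        = (∏ u, EReal.exp
              (softOr α ![softUnreach α W l x u, elog (ENNReal.ofReal (1 - W u y))])) *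
            EReal.exp (softUnreach α W l x y) := by
          rw [softUnreach, EReal.exp_add, EReal.exp_sum]
      _ ≤ (∏ u, bernMeasure W (E u)) * bernMeasure W (reachSet l x y)ᶜ := by
          gcongr with u
          exacts [hstep u, ih y]
      _ ≤ bernMeasure W (⋂ u, E u) * bernMeasure W (reachSet l x y)ᶜ := by
          gcongr
          simpa using hμ.prod_measure_le_of_isLowerSet hE Finset.univ
      _ ≤ bernMeasure W ((⋂ u, E u) ∩ (reachSet l x y)ᶜ) := by
          simpa using hμ.measure_mul_measure_le_of_isLowerSet (isLowerSet_iInter hE)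
            (isUpperSet_reachSet l x y).compl
      _ = bernMeasure W (reachSet (l + 1) x y)ᶜ := by
          simp only [E, reachSet_succ, compl_union, compl_iUnion, compl_inter]

theorem softC0_le_log (hW : ∀ u v, W u v ∈ Icc (0 : ℝ) 1) (hα : 0 < α) (x y : Fin d) :
    softC0 α W x y ≤ ENNReal.log (bernMeasure W {A | C0 A x y = true}) := by
  refine softOr_le hα fun a => ENNReal.le_log_iff_exp_le.2 ?_
  calc EReal.exp (softReach α W d a x + softReach α W d a y)
      ≤ bernMeasure W (reachSet d a x) * bernMeasure W (reachSet d a y) := by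
        rw [EReal.exp_add]
        gcongr <;> exact exp_softReach_le hW hα d a _
    _ ≤ bernMeasure W (reachSet d a x ∩ reachSet d a y) := by
        have := isProbabilityMeasure_bernMeasure hW
        simpa using (isLogSupermodular_bernMeasure W).measure_mul_measure_le_of_isUpperSet
          (isUpperSet_reachSet d a x) (isUpperSet_reachSet d a y)
    _ ≤ bernMeasure W {A | C0 A x y = true} := by
        rw [setOf_C0_eq]
        exact measure_mono (subset_iUnion (fun a => reachSet d a x ∩ reachSet d a y) a)

theorem softS0_le_log (hW : ∀ u v, W u v ∈ Icc (0 : ℝ) 1) (hα : 0 < α) (x y : Fin d) :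
    softS0 α W x y ≤ ENNReal.log (bernMeasure W {A | C0 A x y = true}ᶜ) := by
  have := isProbabilityMeasure_bernMeasure hW
  set E : Fin d → Set (Fin d → Fin d → Bool) := fun a =>
    (reachSet d a x)ᶜ ∪ (reachSet d a y)ᶜ
  have hE : ∀ a, IsLowerSet (E a) := fun a =>
    (isUpperSet_reachSet d a x).compl.union (isUpperSet_reachSet d a y).compl
  rw [softS0, ENNReal.le_log_iff_exp_le, EReal.exp_sum]
  calc ∏ a, EReal.exp (softOr α ![softUnreach α W d a x, softUnreach α W d a y])
      ≤ ∏ a, bernMeasure W (E a) := Finset.prod_le_prod' fun a _ =>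
        exp_softOr_le hα <| Fin.forall_fin_two.2
          ⟨(exp_softUnreach_le hW hα d a x).trans (measure_mono subset_union_left),
            (exp_softUnreach_le hW hα d a y).trans (measure_mono subset_union_right)⟩
    _ ≤ bernMeasure W (⋂ a, E a) := by
        simpa using
          (isLogSupermodular_bernMeasure W).prod_measure_le_of_isLowerSet hE Finset.univ
    _ = bernMeasure W {A | C0 A x y = true}ᶜ := by
        simp only [E, setOf_C0_eq, compl_iUnion, compl_inter]

end SoftBounds

lemma lintegral_ite_one_zero {Ω : Type*} [MeasurableSpace Ω] (μ : Measure Ω) {p : Ω → Prop}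
    [DecidablePred p] (hp : MeasurableSet {a | p a}) :
    ∫⁻ a, (if p a then 1 else 0) ∂μ = μ {a | p a} := by
  rw [← lintegral_indicator_one hp]
  congr with a
  by_cases ha : p a <;> simp [ha]

/-- Theorem 3.7, 0th-order inequalities: the soft d-separation and d-connection
scores lower-bound the logarithms of the expected indicators
`S_A^(0)(x,y) = 1 − C_A^(0)(x,y)` and `C_A^(0)(x,y)` under `Bern(W)`. -/
theorem soft0_le_log_expectation {d : ℕ} (W : Fin d → Fin d → ℝ)
    (hW : ∀ u v, W u v ∈ Set.Icc (0 : ℝ) 1) (α : ℝ) (hα : α ∈ Set.Ioc (0 : ℝ) 1)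
    (x y : Fin d) :
    softS0 α W x y ≤
      elog (∫⁻ A, (if C0 A x y = true then 0 else 1) ∂ bernMeasure W) ∧
    softC0 α W x y ≤
      elog (∫⁻ A, (if C0 A x y = true then 1 else 0) ∂ bernMeasure W) := by
  have hC : MeasurableSet {A : Fin d → Fin d → Bool | C0 A x y = true} :=
    (toFinite _).measurableSet
  have hS : ∫⁻ A, (if C0 A x y = true then 0 else 1) ∂ bernMeasure W
      = bernMeasure W {A | C0 A x y = true}ᶜ := by
    simpa only [ite_not, compl_ofPred] using
      lintegral_ite_one_zero (p := fun A => ¬C0 A x y = true) (bernMeasure W) hC.compl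
  rw [elog_eq_log, hS, lintegral_ite_one_zero _ hC]
  exact ⟨softS0_le_log hW hα.1 x y, softC0_le_log hW hα.1 x y⟩

end
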